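/- arXiv:1911.01391 — 2 statements merged into one kernel-verified Lean document; each statement's English description precedes it below -/
import Mathlib

section
/- Fix u > 0, a > 0, b > 0 and λ ∈ (0,1), and for δ > −1 set s(δ) := D(δ)/√K(δ), where D(δ) := 1 − λ + λ a (1+δ) and K(δ) := u(1 − λ + λ b²(1+δ)²) + (1 − λ + λ a²(1+δ)²) − D(δ)² (one has K(δ) > 0). Then s is differentiable in δ and ∂s/∂δ > 0 if and only if 1 + u > a·(1 + (b²/a²)·u)·(1+δ), equivalently a(1+u) > (a² + b² u)(1+δ). -/
/-! Writing `t = 1 + δ`, the variance term simplifies to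
`K = u (1 - λ + λ b² t²) + λ (1 - λ) (1 - a t)²`, which is positive. For `s = D / √K` one has
`s' = (2 D' K - D K') / (2 K √K)`, so the sign of `s'` is that of `2 D' K - D K'`, and this
expression collapses to `2 λ (1 - λ) (a (1 + u) - (a² + b² u) t)`. -/

open Real Filter Topology

theorem HasDerivAt.div_sqrt {f g : ℝ → ℝ} {f' g' x : ℝ} (hf : HasDerivAt f f' x)
    (hg : HasDerivAt g g' x) (hgx : 0 < g x) :
    HasDerivAt (fun y => f y / √(g y)) ((2 * f' * g x - f x * g') / (2 * g x * √(g x))) x := by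
  have hsqrt : 0 < √(g x) := sqrt_pos.2 hgx
  refine (hf.div (hg.sqrt hgx.ne') hsqrt.ne').congr_deriv ?_
  rw [sq_sqrt hgx.le]
  field_simp
  rw [sq_sqrt hgx.le]
  ring

section Portfolio

variable (u a b lam : ℝ)

theorem portfolio_variance_eq (t : ℝ) :
    u * (1 - lam + lam * b ^ 2 * t ^ 2) + (1 - lam + lam * a ^ 2 * t ^ 2)
        - (1 - lam + lam * a * t) ^ 2
      = u * (1 - lam + lam * b ^ 2 * t ^ 2) + lam * (1 - lam) * (1 - a * t) ^ 2 := by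
  ring

theorem portfolio_variance_pos {u lam : ℝ} (hu : 0 < u) (hlam : lam ∈ Set.Ioo (0 : ℝ) 1)
    (t : ℝ) : 0 < u * (1 - lam + lam * b ^ 2 * t ^ 2) + lam * (1 - lam) * (1 - a * t) ^ 2 := by
  obtain ⟨hlam0, hlam1⟩ := hlam
  have : 0 < 1 - lam := sub_pos.2 hlam1
  positivity

theorem hasDerivAt_portfolio_mean (δ : ℝ) :
    HasDerivAt (fun x => 1 - lam + lam * a * (1 + x)) (lam * a) δ := by
  simpa using ((hasDerivAt_id δ).const_add 1).const_mul (lam * a) |>.const_add (1 - lam)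

theorem hasDerivAt_portfolio_variance (δ : ℝ) :
    HasDerivAt (fun x => u * (1 - lam + lam * b ^ 2 * (1 + x) ^ 2)
        + lam * (1 - lam) * (1 - a * (1 + x)) ^ 2)
      (2 * u * lam * b ^ 2 * (1 + δ) - 2 * lam * (1 - lam) * a * (1 - a * (1 + δ))) δ := by
  have h1 : HasDerivAt (fun x : ℝ => 1 + x) 1 δ := (hasDerivAt_id δ).const_add 1
  have h2 := ((h1.fun_pow 2).const_mul (lam * b ^ 2)).const_add (1 - lam) |>.const_mul u
  have h3 := ((h1.const_mul a).const_sub 1).fun_pow 2 |>.const_mul (lam * (1 - lam))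
  exact (h2.add h3).congr_deriv (by norm_num; ring)

theorem sharpe_numerator_eq (t : ℝ) :
    2 * (lam * a) * (u * (1 - lam + lam * b ^ 2 * t ^ 2) + lam * (1 - lam) * (1 - a * t) ^ 2)
        - (1 - lam + lam * a * t)
          * (2 * u * lam * b ^ 2 * t - 2 * lam * (1 - lam) * a * (1 - a * t))
      = 2 * (lam * (1 - lam)) * (a * (1 + u) - (a ^ 2 + b ^ 2 * u) * t) := by
  ring

end Portfolio

theorem mul_one_add_div_sq_mul_lt_iff {a : ℝ} (ha : 0 < a) (c u t : ℝ) :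
    a * (1 + c / a ^ 2 * u) * t < 1 + u ↔ (a ^ 2 + c * u) * t < a * (1 + u) := by
  have hrw : a * (1 + c / a ^ 2 * u) * t = (a ^ 2 + c * u) * t / a := by
    field_simp
  rw [hrw, div_lt_iff₀ ha, mul_comm (1 + u)]

theorem sharpe_monotone_in_delta_general
    (u a b lam : ℝ) (hu : 0 < u) (ha : 0 < a)
    (hlam : lam ∈ Set.Ioo (0:ℝ) 1)
    (D K s : ℝ → ℝ)
    (hD : ∀ δ, D δ = 1 - lam + lam * a * (1 + δ))
    (hK : ∀ δ, K δ = u * (1 - lam + lam * b^2 * (1+δ)^2)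
        + (1 - lam + lam * a^2 * (1+δ)^2) - (D δ)^2)
    (hs : ∀ δ, -1 < δ → s δ = D δ / Real.sqrt (K δ)) :
    ∀ δ, -1 < δ →
      0 < K δ ∧ DifferentiableAt ℝ s δ ∧
      (0 < deriv s δ ↔ a * (1 + b^2/a^2 * u) * (1+δ) < 1 + u) ∧
      (0 < deriv s δ ↔ (a^2 + b^2*u) * (1+δ) < a * (1+u)) := by
  intro δ hδ
  have hK' : K = fun x => u * (1 - lam + lam * b ^ 2 * (1 + x) ^ 2)
      + lam * (1 - lam) * (1 - a * (1 + x)) ^ 2 := by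
    funext x
    rw [hK, hD, portfolio_variance_eq]
  have hKpos : 0 < K δ := hK' ▸ portfolio_variance_pos a b hu hlam (1 + δ)
  have hs_eq : s =ᶠ[𝓝 δ] fun x => D x / √(K x) :=
    eventually_of_mem (isOpen_Ioi.mem_nhds hδ) fun x hx => hs x hx
  have hsd := ((funext hD ▸ hasDerivAt_portfolio_mean a lam δ).div_sqrt
    (hK' ▸ hasDerivAt_portfolio_variance u a b lam δ) hKpos).congr_of_eventuallyEq hs_eq
  have hsign : 0 < deriv s δ ↔ (a ^ 2 + b ^ 2 * u) * (1 + δ) < a * (1 + u) := by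
    have : 0 < lam * (1 - lam) := mul_pos hlam.1 (sub_pos.2 hlam.2)
    rw [hsd.deriv, div_pos_iff_of_pos_right (by positivity), hK', hD, sharpe_numerator_eq,
      mul_pos_iff_of_pos_left (by positivity), sub_pos]
  exact ⟨hKpos, hsd.differentiableAt,
    hsign.trans (mul_one_add_div_sq_mul_lt_iff ha _ _ _).symm, hsign⟩

/-- Monotonicity of the two-state portfolio Sharpe ratio in the allocation
change δ: for δ > −1, s(δ) = D(δ)/√K(δ) is differentiable (K(δ) > 0) and
∂s/∂δ > 0 iff 1 + u > a(1 + (b²/a²)u)(1+δ), equivalently a(1+u) > (a² + b²u)(1+δ). -/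
theorem sharpe_monotone_in_delta
    (u a b lam : ℝ) (hu : 0 < u) (ha : 0 < a) (hb : 0 < b)
    (hlam : lam ∈ Set.Ioo (0:ℝ) 1)
    (D K s : ℝ → ℝ)
    (hD : ∀ δ, D δ = 1 - lam + lam * a * (1 + δ))
    (hK : ∀ δ, K δ = u * (1 - lam + lam * b^2 * (1+δ)^2)
        + (1 - lam + lam * a^2 * (1+δ)^2) - (D δ)^2)
    (hs : ∀ δ, -1 < δ → s δ = D δ / Real.sqrt (K δ)) :
    ∀ δ, -1 < δ →
      0 < K δ ∧ DifferentiableAt ℝ s δ ∧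
      (0 < deriv s δ ↔ a * (1 + b^2/a^2 * u) * (1+δ) < 1 + u) ∧
      (0 < deriv s δ ↔ (a^2 + b^2*u) * (1+δ) < a * (1+u)) :=
  sharpe_monotone_in_delta_general u a b lam hu ha hlam D K s hD hK hs
end

section
/- Let β > 0, σ₀ > 0, σ_ε > 0 and p ∈ (0,1]; set v := σ_ε²/(β²σ₀²) and define f(φ) := (βσ₀/√φ)(1 − p(φ−1)/2) + √(β²σ₀²/φ + σ_ε²)·p(φ−1)/2 and g(φ) := −√φ/p + (1/2)(1 − (1+vφ)^{−1/2})·√φ·(φ−1) + (√(1+vφ) − 1)·φ^{3/2} for φ ≥ 1. Then: (i) f′(φ) = (βσ₀ p/(2φ²))·g(φ) for all φ ≥ 1; (ii) g′(φ) ≥ (1/2)·φ^{−1/2}·g(1) for all φ ≥ 1; (iii) consequently, if g(1) ≥ 0 then f′(φ) ≥ 0 for all φ ≥ 1, so f is minimized over [1,∞) at φ = 1. -/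
/-!
With `a = √φ` and `b = √(1 + vφ)`, the second square root in `f` equals `βσ₀ b / a`, and in these
variables differentiating `f` gives `f' = βσ₀p/(2φ²) · g` by field arithmetic.

For the bound on `g'`, write `g(φ) = g(1)√φ + √φ · ((1 − 1/b)(φ − 1)/2 + (b − 1)φ − (b(1) − 1))`:
on `[1, ∞)` the second summand is a product of nonnegative nondecreasing functions, so its
derivative is nonnegative. The same decomposition shows `g ≥ 0` on `[1, ∞)` when `g(1) ≥ 0`, so
then `f' ≥ 0` and `f` is nondecreasing there.
-/

namespace RoboAdvising

open Real Set

noncomputable def personalization (β σ0 σε p x : ℝ) : ℝ :=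
  β*σ0/√x * (1 - p*(x-1)/2) + √(β^2*σ0^2/x + σε^2) * (p*(x-1)/2)

noncomputable def factor (p v x : ℝ) : ℝ :=
  -√x/p + (1/2) * (1 - 1/√(1 + v*x)) * √x * (x - 1) + (√(1 + v*x) - 1) * (x * √x)

noncomputable def factorExcess (v x : ℝ) : ℝ :=
  √x * ((1/2) * (1 - 1/√(1 + v*x)) * (x - 1) + ((√(1 + v*x) - 1) * x - (√(1 + v) - 1)))

variable {p v x : ℝ}

theorem factor_one (p v : ℝ) : factor p v 1 = √(1 + v) - 1 - 1/p := by
  simp only [factor, sqrt_one, mul_one]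
  ring

theorem factor_eq_mul_sqrt_add_factorExcess (p v x : ℝ) :
    factor p v x = (√(1 + v) - 1 - 1/p) * √x + factorExcess v x := by
  simp only [factor, factorExcess]
  ring

theorem one_le_sqrt_one_add_mul (hv : 0 ≤ v) (hx : 0 ≤ x) : 1 ≤ √(1 + v*x) :=
  one_le_sqrt.mpr (by nlinarith)

theorem monotoneOn_factorExcess (hv : 0 ≤ v) : MonotoneOn (factorExcess v) (Ici 1) := by
  have one_div_le_one {x : ℝ} (hx : 1 ≤ x) : 1 / √(1 + v*x) ≤ 1 :=
    div_le_one_of_le₀ (one_le_sqrt_one_add_mul hv (by linarith)) (sqrt_nonneg _)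
  intro x hx y hy hxy
  rw [mem_Ici] at hx hy
  have hbx := one_le_sqrt_one_add_mul hv (by linarith : (0:ℝ) ≤ x)
  have hby := one_le_sqrt_one_add_mul hv (by linarith : (0:ℝ) ≤ y)
  have hb1 : √(1 + v) ≤ √(1 + v * x) := sqrt_le_sqrt (by nlinarith)
  unfold factorExcess
  gcongr
  · have := one_div_le_one hx
    nlinarith
  · linarith [one_div_le_one hy]

theorem factorExcess_nonneg (hv : 0 ≤ v) (hx : 1 ≤ x) : 0 ≤ factorExcess v x := by
  have h := monotoneOn_factorExcess hv (mem_Ici.mpr le_rfl) (mem_Ici.mpr hx) hx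
  simpa [factorExcess] using h

theorem differentiableAt_factorExcess (hv : 0 ≤ v) (hx : 0 < x) :
    DifferentiableAt ℝ (factorExcess v) x := by
  have h1 : x ≠ 0 := hx.ne'
  have h2 : 1 + v * x ≠ 0 := by nlinarith
  have h3 : √(1 + v * x) ≠ 0 := (sqrt_pos.mpr (by nlinarith)).ne'
  unfold factorExcess
  fun_prop (disch := assumption)

theorem le_deriv_factor (p : ℝ) (hv : 0 ≤ v) (hx : 1 ≤ x) :
    1/(2*√x) * factor p v 1 ≤ deriv (factor p v) x := by
  have hx0 : 0 < x := by linarith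
  have hE := differentiableAt_factorExcess hv hx0
  have hd : HasDerivAt (factor p v)
      ((√(1 + v) - 1 - 1/p) * (1/(2*√x)) + deriv (factorExcess v) x) x := by
    rw [funext (factor_eq_mul_sqrt_add_factorExcess p v)]
    exact ((hasDerivAt_sqrt hx0.ne').const_mul _).add hE.hasDerivAt
  have hE_nonneg : 0 ≤ deriv (factorExcess v) x := by
    rw [← hE.derivWithin (uniqueDiffOn_Ici 1 x hx)]
    exact (monotoneOn_factorExcess hv).derivWithin_nonneg
  rw [hd.deriv, factor_one]
  linarith

theorem factor_nonneg (hv : 0 ≤ v) (h1 : 0 ≤ factor p v 1) (hx : 1 ≤ x) : 0 ≤ factor p v x := by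
  rw [factor_eq_mul_sqrt_add_factorExcess, ← factor_one]
  exact add_nonneg (mul_nonneg h1 (sqrt_nonneg x)) (factorExcess_nonneg hv hx)

theorem sqrt_div_add_sq {c : ℝ} (s : ℝ) (hc : 0 < c) (hx : 0 < x) :
    √(c^2/x + s^2) = c * √(1 + s^2/c^2 * x) / √x := by
  have h : c^2/x + s^2 = (c * √(1 + s^2/c^2 * x) / √x)^2 := by
    rw [div_pow, mul_pow, sq_sqrt hx.le, sq_sqrt (by positivity)]
    field_simp
  rw [h, sqrt_sq (div_nonneg (mul_nonneg hc.le (sqrt_nonneg _)) (sqrt_nonneg _))]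

theorem hasDerivAt_personalization {β σ0 : ℝ} (σε : ℝ) (hc : 0 < β*σ0) (hp : p ≠ 0)
    (hx : 0 < x) :
    HasDerivAt (personalization β σ0 σε p)
      (β*σ0*p/(2*x^2) * factor p (σε^2/(β^2*σ0^2)) x) x := by
  have ha : 0 < √x := sqrt_pos.mpr hx
  have hc2 : 0 < β^2*σ0^2 := by rw [← mul_pow]; positivity
  have hw0 : 0 < β^2*σ0^2/x + σε^2 := by positivity
  have hlin : HasDerivAt (fun y => p*(y-1)/2) (p/2) x := by
    simpa using (((hasDerivAt_id x).sub_const 1).const_mul p).div_const 2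
  have hinner : HasDerivAt (fun y => β^2*σ0^2/y + σε^2) (-(β^2*σ0^2) / x^2) x := by
    simpa [div_eq_mul_inv] using ((hasDerivAt_inv hx.ne').const_mul (β^2*σ0^2)).add_const (σε^2)
  have h := (((hasDerivAt_const x (β*σ0)).fun_div (hasDerivAt_sqrt hx.ne') ha.ne').fun_mul
    (hlin.const_sub 1)).fun_add ((hinner.sqrt hw0.ne').fun_mul hlin)
  refine h.congr_deriv ?_
  have hw : √(β^2*σ0^2/x + σε^2) = β*σ0 * √(1 + σε^2/(β^2*σ0^2) * x) / √x := by
    simpa only [mul_pow] using sqrt_div_add_sq σε hc hx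
  rw [hw, factor]
  set b := √(1 + σε^2/(β^2*σ0^2) * x)
  have hb : 0 < b := sqrt_pos.mpr (by positivity)
  have hβ : β ≠ 0 := left_ne_zero_of_mul hc.ne'
  have hσ0 : σ0 ≠ 0 := right_ne_zero_of_mul hc.ne'
  set a := √x
  rw [show x = a^2 from (sq_sqrt hx.le).symm]
  field_simp
  ring

end RoboAdvising

open RoboAdvising Set in
theorem personalization_derivative_factorization_general
    (β σ0 σε p : ℝ) (hβ : 0 < β) (hσ0 : 0 < σ0)
    (hp : p ∈ Set.Ioc (0:ℝ) 1)
    (v : ℝ) (hv : v = σε^2/(β^2*σ0^2))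
    (f g : ℝ → ℝ)
    (hf : ∀ φ, 1 ≤ φ → f φ = β*σ0/Real.sqrt φ * (1 - p*(φ-1)/2)
        + Real.sqrt (β^2*σ0^2/φ + σε^2) * (p*(φ-1)/2))
    (hg : ∀ φ, 0 < φ → g φ = -Real.sqrt φ/p
        + (1/2) * (1 - 1/Real.sqrt (1 + v*φ)) * Real.sqrt φ * (φ - 1)
        + (Real.sqrt (1 + v*φ) - 1) * (φ * Real.sqrt φ)) :
    (∀ φ, 1 ≤ φ →
      HasDerivWithinAt f (β*σ0*p/(2*φ^2) * g φ) (Set.Ici 1) φ) ∧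
    (∀ φ, 1 ≤ φ → 1/(2*Real.sqrt φ) * g 1 ≤ deriv g φ) ∧
    (0 ≤ g 1 →
      (∀ φ, 1 ≤ φ → 0 ≤ β*σ0*p/(2*φ^2) * g φ) ∧ IsMinOn f (Set.Ici 1) 1) := by
  have hv0 : 0 ≤ v := hv ▸ by positivity
  have hgf : EqOn g (factor p v) (Ioi 0) := fun φ hφ => hg φ hφ
  have hf' : ∀ φ, 1 ≤ φ → HasDerivWithinAt f (β*σ0*p/(2*φ^2) * g φ) (Ici 1) φ := by
    intro φ hφ
    rw [hgf (by simp; linarith), hv]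
    exact (hasDerivAt_personalization σε (by positivity) hp.1.ne' (by linarith)).hasDerivWithinAt
      |>.congr hf (hf φ hφ)
  have hg1 : g 1 = factor p v 1 := hgf (by simp)
  have hg_nonneg : 0 ≤ g 1 → ∀ φ, 1 ≤ φ → 0 ≤ β*σ0*p/(2*φ^2) * g φ := fun h1 φ hφ => by
    rw [hgf (by simp; linarith)]
    exact mul_nonneg (by have := hp.1; positivity) (factor_nonneg hv0 (hg1 ▸ h1) hφ)
  refine ⟨hf', fun φ hφ => ?_, fun h1 => ⟨hg_nonneg h1, ?_⟩⟩
  · rw [hg1, (hgf.eventuallyEq_of_mem (Ioi_mem_nhds (by linarith))).deriv_eq]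
    exact le_deriv_factor p hv0 hφ
  · have hmono : MonotoneOn f (Ici 1) :=
      monotoneOn_of_hasDerivWithinAt_nonneg (convex_Ici 1)
        (fun φ hφ => (hf' φ hφ).continuousWithinAt)
        (fun φ hφ => (hf' φ (interior_subset hφ)).mono interior_subset)
        (fun φ hφ => hg_nonneg h1 φ (interior_subset hφ))
    exact fun φ hφ => hmono self_mem_Ici hφ hφ

/-- With v = σ_ε²/(β²σ₀²) and
g(φ) = −√φ/p + (1/2)(1 − (1+vφ)^{−1/2})√φ(φ−1) + (√(1+vφ) − 1)φ^{3/2}: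
(i) f′(φ) = (βσ₀p/(2φ²))·g(φ) on [1,∞); (ii) g′(φ) ≥ (1/2)φ^{−1/2}g(1) for φ ≥ 1;
(iii) if g(1) ≥ 0 then f′(φ) ≥ 0 for all φ ≥ 1, so f is minimized on [1,∞) at φ = 1. -/
theorem personalization_derivative_factorization
    (β σ0 σε p : ℝ) (hβ : 0 < β) (hσ0 : 0 < σ0) (hσε : 0 < σε)
    (hp : p ∈ Set.Ioc (0:ℝ) 1)
    (v : ℝ) (hv : v = σε^2/(β^2*σ0^2))
    (f g : ℝ → ℝ)
    (hf : ∀ φ, 1 ≤ φ → f φ = β*σ0/Real.sqrt φ * (1 - p*(φ-1)/2)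
        + Real.sqrt (β^2*σ0^2/φ + σε^2) * (p*(φ-1)/2))
    (hg : ∀ φ, 0 < φ → g φ = -Real.sqrt φ/p
        + (1/2) * (1 - 1/Real.sqrt (1 + v*φ)) * Real.sqrt φ * (φ - 1)
        + (Real.sqrt (1 + v*φ) - 1) * (φ * Real.sqrt φ)) :
    (∀ φ, 1 ≤ φ →
      HasDerivWithinAt f (β*σ0*p/(2*φ^2) * g φ) (Set.Ici 1) φ) ∧
    (∀ φ, 1 ≤ φ → 1/(2*Real.sqrt φ) * g 1 ≤ deriv g φ) ∧
    (0 ≤ g 1 →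
      (∀ φ, 1 ≤ φ → 0 ≤ β*σ0*p/(2*φ^2) * g φ) ∧ IsMinOn f (Set.Ici 1) 1) :=
  personalization_derivative_factorization_general β σ0 σε p hβ hσ0 hp v hv f g hf hg
end
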